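/- arXiv:math/0311230 — 12 statements merged into one kernel-verified Lean document; each statement's English description precedes it below -/
import Mathlib

section
/- If m = λ₀ + λ₁ + ⋯ + λₙ is a weakM-partition of m (i.e., the set of all subpartition sums {∑_{i∈I} λᵢ : I ⊆ {0,…,n}} equals {0,1,…,m}), then λᵢ ≤ 1 + λ₀ + ⋯ + λ_{i-1} for all i ≤ n. -/
/-! If λᵢ > 1 + λ₀ + ⋯ + λ_{i-1}, the value λ₀ + ⋯ + λ_{i-1} + 1 lies in [0, m] but is no subsum:
a subcollection using only parts before i sums to at most λ₀ + ⋯ + λ_{i-1}, while one using a part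
λⱼ with j ≥ i sums to at least λⱼ ≥ λᵢ. -/

open Finset

theorem subset_range_of_sum_lt {lam : ℕ → ℕ} {n i : ℕ}
    (hmono : ∀ j, i ≤ j → j ≤ n → lam i ≤ lam j) {I : Finset ℕ} (hI : I ⊆ range (n + 1))
    (hlt : ∑ j ∈ I, lam j < lam i) : I ⊆ range i := by
  intro j hj
  by_contra hji
  have hij : i ≤ j := by simpa using hji
  have hjn : j ≤ n := Nat.lt_succ_iff.mp (mem_range.mp (hI hj))
  have : lam j ≤ ∑ k ∈ I, lam k := single_le_sum (fun k _ => Nat.zero_le (lam k)) hj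
  have := hmono j hij hjn
  omega

theorem sum_range_add_le_sum_range {lam : ℕ → ℕ} {n i : ℕ} (hi : i ≤ n) :
    ∑ j ∈ range i, lam j + lam i ≤ ∑ j ∈ range (n + 1), lam j := by
  rw [← sum_range_succ]
  exact sum_le_sum_of_subset (range_subset_range.mpr (by omega))

theorem weakM_part_bound_general (m n : ℕ) (lam : ℕ → ℕ)
    (hmono : ∀ i j, i ≤ j → j ≤ n → lam i ≤ lam j)
    (hsum : ∑ i ∈ Finset.range (n + 1), lam i = m)
    (hweak : ∀ l ≤ m, ∃ I ⊆ Finset.range (n + 1), ∑ i ∈ I, lam i = l) :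
    ∀ i ≤ n, lam i ≤ 1 + ∑ j ∈ Finset.range i, lam j := by
  intro i hi
  by_contra! hgap
  set S := ∑ j ∈ range i, lam j
  have hSm : S + 1 ≤ m := by
    have := sum_range_add_le_sum_range (lam := lam) hi
    omega
  obtain ⟨I, hI, hIsum⟩ := hweak (S + 1) hSm
  have hIi : I ⊆ range i := subset_range_of_sum_lt (hmono i) hI (by omega)
  have : ∑ j ∈ I, lam j ≤ S := sum_le_sum_of_subset hIi
  omega

/-- If m = λ₀ + ⋯ + λₙ is a weakM-partition of m, then
λᵢ ≤ 1 + λ₀ + ⋯ + λ_{i-1} for all i ≤ n. -/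
theorem weakM_part_bound (m n : ℕ) (lam : ℕ → ℕ)
    (hpos : ∀ i ≤ n, 0 < lam i)
    (hmono : ∀ i j, i ≤ j → j ≤ n → lam i ≤ lam j)
    (hsum : ∑ i ∈ Finset.range (n + 1), lam i = m)
    (hweak : ∀ l ≤ m, ∃ I ⊆ Finset.range (n + 1), ∑ i ∈ I, lam i = l) :
    ∀ i ≤ n, lam i ≤ 1 + ∑ j ∈ Finset.range i, lam j :=
  weakM_part_bound_general m n lam hmono hsum hweak
end

section
/- If m = λ₀ + λ₁ + ⋯ + λₙ is a weakM-partition of m, then n ≥ ⌊log₂ m⌋. -/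
/-!
If every integer up to the total is a subset sum of a nondecreasing sequence, then no part can
exceed one more than the sum of the parts before it: otherwise that sum plus one is not reachable,
since any subset using a later part is too large and one avoiding them is too small. Hence the
partial sums satisfy `s_{k+1} + 1 ≤ 2 (s_k + 1)`, so `m + 1 ≤ 2 ^ (n + 1)`.
-/

open Finset

theorem le_sum_range_add_one_of_forall_exists_subset_sum {a : ℕ → ℕ} {n : ℕ}
    (hmono : MonotoneOn a (Set.Iic n))
    (hweak : ∀ l ≤ ∑ i ∈ range (n + 1), a i, ∃ I ⊆ range (n + 1), ∑ i ∈ I, a i = l)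
    {k : ℕ} (hk : k ≤ n) :
    a k ≤ ∑ i ∈ range k, a i + 1 := by
  set S := ∑ i ∈ range k, a i
  have hsplit : S + a k ≤ ∑ i ∈ range (n + 1), a i := by
    rw [← sum_range_succ]
    exact sum_le_sum_of_subset (range_subset_range.2 (by omega))
  by_cases hreach : S + 1 ≤ ∑ i ∈ range (n + 1), a i
  · obtain ⟨I, hI, hIsum⟩ := hweak (S + 1) hreach
    by_cases hlate : ∃ i ∈ I, k ≤ i
    · obtain ⟨i, hiI, hki⟩ := hlate
      have hin : i ≤ n := Nat.lt_succ_iff.1 (mem_range.1 (hI hiI))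
      calc a k ≤ a i := hmono (Set.mem_Iic.2 hk) (Set.mem_Iic.2 hin) hki
        _ ≤ ∑ j ∈ I, a j := single_le_sum (fun _ _ => Nat.zero_le _) hiI
        _ = S + 1 := hIsum
    · push Not at hlate
      have hIk : I ⊆ range k := fun i hi => mem_range.2 (hlate i hi)
      have := sum_le_sum_of_subset (f := a) hIk
      omega
  · omega

theorem sum_range_lt_two_pow_of_le_sum_range_add_one {a : ℕ → ℕ} {n : ℕ}
    (h : ∀ k < n, a k ≤ ∑ i ∈ range k, a i + 1) :
    ∑ i ∈ range n, a i < 2 ^ n := by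
  induction n with
  | zero => simp
  | succ n ih =>
    have hprev := ih fun k hk => h k (by omega)
    have hlast := h n (by omega)
    rw [sum_range_succ, pow_succ]
    omega

theorem weakM_parts_lower_bound_general (m n : ℕ) (lam : ℕ → ℕ)
    (hmono : ∀ i j, i ≤ j → j ≤ n → lam i ≤ lam j)
    (hsum : ∑ i ∈ Finset.range (n + 1), lam i = m)
    (hweak : ∀ l ≤ m, ∃ I ⊆ Finset.range (n + 1), ∑ i ∈ I, lam i = l) :
    n ≥ Nat.log 2 m := by
  subst hsum
  have hmono' : MonotoneOn lam (Set.Iic n) := fun i _ j hj hij => hmono i j hij hj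
  have hlt : ∑ i ∈ range (n + 1), lam i < 2 ^ (n + 1) :=
    sum_range_lt_two_pow_of_le_sum_range_add_one fun k hk =>
      le_sum_range_add_one_of_forall_exists_subset_sum hmono' hweak (Nat.lt_succ_iff.1 hk)
  exact Nat.lt_succ_iff.1 (Nat.log_lt_of_lt_pow' n.succ_ne_zero hlt)

/-- If m = λ₀ + ⋯ + λₙ is a weakM-partition of m, then n ≥ ⌊log₂ m⌋. -/
theorem weakM_parts_lower_bound (m n : ℕ) (hm : 0 < m) (lam : ℕ → ℕ)
    (hpos : ∀ i ≤ n, 0 < lam i)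
    (hmono : ∀ i j, i ≤ j → j ≤ n → lam i ≤ lam j)
    (hsum : ∑ i ∈ Finset.range (n + 1), lam i = m)
    (hweak : ∀ l ≤ m, ∃ I ⊆ Finset.range (n + 1), ∑ i ∈ I, lam i = l) :
    n ≥ Nat.log 2 m :=
  weakM_parts_lower_bound_general m n lam hmono hsum hweak
end

section
/- Every M-partition of a positive integer m has exactly ⌊log₂ m⌋ + 1 parts. -/
/-!
If `n + 1` parts realise every integer in `[0, m]` as a subset sum, then counting subsets gives
`m + 1 ≤ 2 ^ (n + 1)`, i.e. `log₂ m ≤ n`. Conversely, with `t = log₂ m`, the parts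
`⌈⌊m / 2 ^ (t - k)⌋ / 2⌉` for `k = 0, …, t` form a nondecreasing sequence of positive integers
whose partial sums are `⌊m / 2 ^ (t + 1 - k)⌋`; each part exceeds the sum of the previous ones
by at most one, so every integer up to `m` is a subset sum. Minimality then forces `n = t`.
-/

open Finset

theorem succ_le_two_pow_card_of_forall_exists_subset_sum {ι : Type*} [DecidableEq ι]
    (s : Finset ι) (f : ι → ℕ) (m : ℕ) (h : ∀ l ≤ m, ∃ I ⊆ s, ∑ i ∈ I, f i = l) :
    m + 1 ≤ 2 ^ #s := by
  have hcover : range (m + 1) ⊆ s.powerset.image (fun I => ∑ i ∈ I, f i) := by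
    intro l hl
    obtain ⟨I, hIs, hI⟩ := h l (Nat.lt_succ_iff.1 (mem_range.1 hl))
    exact mem_image.2 ⟨I, mem_powerset.2 hIs, hI⟩
  calc m + 1 = #(range (m + 1)) := (card_range _).symm
    _ ≤ #(s.powerset.image (fun I => ∑ i ∈ I, f i)) := card_le_card hcover
    _ ≤ #s.powerset := card_image_le
    _ = 2 ^ #s := card_powerset s

/-- Brown's criterion for complete sequences. -/
theorem exists_subset_sum_of_le_sum_range_add_one (f : ℕ → ℕ) (k : ℕ)
    (hf : ∀ i < k, f i ≤ ∑ j ∈ range i, f j + 1) :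
    ∀ l ≤ ∑ j ∈ range k, f j, ∃ I ⊆ range k, ∑ i ∈ I, f i = l := by
  induction k with
  | zero => intro l hl; exact ⟨∅, empty_subset _, by simpa using (Nat.le_zero.1 hl).symm⟩
  | succ k ih =>
    have ih := ih fun i hi => hf i (Nat.lt_succ_of_lt hi)
    have hk := hf k (Nat.lt_succ_self k)
    intro l hl
    rw [sum_range_succ] at hl
    by_cases hlk : l ≤ ∑ j ∈ range k, f j
    · obtain ⟨I, hI, hIl⟩ := ih l hlk
      exact ⟨I, hI.trans (range_subset_range.2 k.le_succ), hIl⟩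
    · obtain ⟨I, hI, hIl⟩ := ih (l - f k) (by omega)
      have hkI : k ∉ I := fun h => by simpa using hI h
      refine ⟨insert k I, insert_subset (self_mem_range_succ k)
        (hI.trans (range_subset_range.2 k.le_succ)), ?_⟩
      rw [sum_insert hkI, hIl]
      omega

def halvingPart (m t k : ℕ) : ℕ := m / 2 ^ (t - k) - m / 2 ^ (t - k) / 2

section halvingPart

variable {m t k : ℕ}

theorem div_two_pow_succ_sub (hk : k ≤ t) : m / 2 ^ (t + 1 - k) = m / 2 ^ (t - k) / 2 := by
  rw [Nat.div_div_eq_div_mul, ← pow_succ, Nat.sub_add_comm hk]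

theorem halvingPart_pos (hm : 2 ^ t ≤ m) (k : ℕ) : 0 < halvingPart m t k := by
  have : 1 ≤ m / 2 ^ (t - k) :=
    (Nat.le_div_iff_mul_le (by positivity)).2
      (by simpa using (Nat.pow_le_pow_right two_pos (Nat.sub_le t k)).trans hm)
  unfold halvingPart
  omega

theorem halvingPart_mono {i j : ℕ} (hij : i ≤ j) : halvingPart m t i ≤ halvingPart m t j := by
  have : m / 2 ^ (t - i) ≤ m / 2 ^ (t - j) :=
    Nat.div_le_div_left (Nat.pow_le_pow_right two_pos (by omega)) (by positivity)
  unfold halvingPart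
  omega

theorem sum_range_halvingPart (hm : m < 2 ^ (t + 1)) (hk : k ≤ t + 1) :
    ∑ j ∈ range k, halvingPart m t j = m / 2 ^ (t + 1 - k) := by
  induction k with
  | zero => exact (Nat.div_eq_of_lt hm).symm
  | succ k ih =>
    rw [sum_range_succ, ih (by omega), div_two_pow_succ_sub (by omega), halvingPart,
      Nat.add_sub_add_right]
    generalize m / 2 ^ (t - k) = a
    omega

theorem halvingPart_le_sum_range_add_one (hm : m < 2 ^ (t + 1)) (hk : k ≤ t) :
    halvingPart m t k ≤ ∑ j ∈ range k, halvingPart m t j + 1 := by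
  rw [sum_range_halvingPart hm (by omega), div_two_pow_succ_sub hk, halvingPart]
  generalize m / 2 ^ (t - k) = a
  omega

end halvingPart

theorem M_partition_number_of_parts_general (m n : ℕ) (hm : 0 < m) (lam : ℕ → ℕ)
    (hweak : ∀ l ≤ m, ∃ I ⊆ Finset.range (n + 1), ∑ i ∈ I, lam i = l)
    (hmin : ∀ (n' : ℕ) (mu : ℕ → ℕ),
      (∀ i ≤ n', 0 < mu i) →
      (∀ i j, i ≤ j → j ≤ n' → mu i ≤ mu j) →
      (∑ i ∈ Finset.range (n' + 1), mu i = m) →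
      (∀ l ≤ m, ∃ I ⊆ Finset.range (n' + 1), ∑ i ∈ I, mu i = l) →
      n ≤ n') :
    n + 1 = Nat.log 2 m + 1 := by
  set t := Nat.log 2 m
  have hlow : 2 ^ t ≤ m := Nat.pow_log_le_self 2 hm.ne'
  have hhigh : m < 2 ^ (t + 1) := Nat.lt_pow_succ_log_self one_lt_two m
  have hsum : ∑ j ∈ range (t + 1), halvingPart m t j = m := by
    simp [sum_range_halvingPart hhigh le_rfl]
  have ht_le_n : t ≤ n := by
    have := succ_le_two_pow_card_of_forall_exists_subset_sum _ lam m hweak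
    rw [card_range] at this
    exact Nat.lt_succ_iff.1 (Nat.log_lt_of_lt_pow hm.ne' (by omega))
  have hn_le_t : n ≤ t := by
    refine hmin t (halvingPart m t) (fun i _ => halvingPart_pos hlow i)
      (fun i j hij _ => halvingPart_mono hij) hsum ?_
    intro l hl
    exact exists_subset_sum_of_le_sum_range_add_one _ _
      (fun i hi => halvingPart_le_sum_range_add_one hhigh (Nat.lt_succ_iff.1 hi)) l
      (hsum.symm ▸ hl)
  omega

/-- Every M-partition of a positive integer m has exactly
⌊log₂ m⌋ + 1 parts.  An M-partition is a weakM-partition with a minimal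
number of parts. -/
theorem M_partition_number_of_parts (m n : ℕ) (hm : 0 < m) (lam : ℕ → ℕ)
    (hpos : ∀ i ≤ n, 0 < lam i)
    (hmono : ∀ i j, i ≤ j → j ≤ n → lam i ≤ lam j)
    (hsum : ∑ i ∈ Finset.range (n + 1), lam i = m)
    (hweak : ∀ l ≤ m, ∃ I ⊆ Finset.range (n + 1), ∑ i ∈ I, lam i = l)
    (hmin : ∀ (n' : ℕ) (mu : ℕ → ℕ),
      (∀ i ≤ n', 0 < mu i) →
      (∀ i j, i ≤ j → j ≤ n' → mu i ≤ mu j) →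
      (∑ i ∈ Finset.range (n' + 1), mu i = m) →
      (∀ l ≤ m, ∃ I ⊆ Finset.range (n' + 1), ∑ i ∈ I, mu i = l) →
      n ≤ n') :
    n + 1 = Nat.log 2 m + 1 :=
  M_partition_number_of_parts_general m n hm lam hweak hmin
end

section
/- A partition λ₀ ≤ λ₁ ≤ ⋯ ≤ λₙ of m is an M-partition if and only if λᵢ ≤ 1 + λ₀ + ⋯ + λ_{i−1} for every i ≤ n and 2^n ≤ λ₀ + λ₁ + ⋯ + λₙ. -/
/-!
If every part is at most one more than the sum of the preceding ones, the subcollection sums of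
the first `t` parts fill the interval `[0, λ₀ + ⋯ + λ_{t-1}]`; conversely, a part exceeding
`1 + λ₀ + ⋯ + λ_{i-1}` leaves that number unreachable, because only the smaller parts can
contribute to it. As for minimality, `n + 1` parts have only `2 ^ (n + 1)` subcollections, so
they cannot cover `[0, m]` once `2 ^ (n + 1) ≤ m`; and for `n + 1 ≤ m < 2 ^ (n + 1)` a partition
of `m` into `n + 1` parts satisfying the inequalities is obtained from one of
`max ⌊m / 2⌋ (n + 1)` into `n` parts by appending the remainder as the largest part.
-/

open Finset

theorem exists_subset_sum_eq_of_le_one_add_sum {lam : ℕ → ℕ} {t : ℕ}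
    (h : ∀ i < t, lam i ≤ 1 + ∑ j ∈ range i, lam j) {l : ℕ}
    (hl : l ≤ ∑ i ∈ range t, lam i) :
    ∃ I ⊆ range t, ∑ i ∈ I, lam i = l := by
  induction t generalizing l with
  | zero => exact ⟨∅, empty_subset _, by simp at hl ⊢; omega⟩
  | succ t ih =>
    have h' : ∀ i < t, lam i ≤ 1 + ∑ j ∈ range i, lam j := fun i hi => h i (by omega)
    have hsub : range t ⊆ range (t + 1) := range_subset_range.2 t.le_succ
    rw [sum_range_succ] at hl
    rcases le_or_gt l (∑ i ∈ range t, lam i) with hlow | hhigh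
    · obtain ⟨I, hI, hsum⟩ := ih h' hlow
      exact ⟨I, hI.trans hsub, hsum⟩
    · have hlast := h t t.lt_succ_self
      obtain ⟨I, hI, hsum⟩ := ih h' (l := l - lam t) (by omega)
      have htI : t ∉ I := fun ht => by simpa using hI ht
      refine ⟨insert t I, insert_subset (self_mem_range_succ t) (hI.trans hsub), ?_⟩
      rw [sum_insert htI]
      omega

theorem add_one_le_two_pow_card_of_forall_exists_subset_sum {α : Type*} {f : α → ℕ}
    {s : Finset α} {m : ℕ} (h : ∀ l ≤ m, ∃ I ⊆ s, ∑ i ∈ I, f i = l) :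
    m + 1 ≤ 2 ^ #s := by
  have hsurj : Set.SurjOn (fun I => ∑ i ∈ I, f i) s.powerset (Iic m) := fun l hl => by
    obtain ⟨I, hI, hsum⟩ := h l (by simpa using hl)
    exact ⟨I, by simpa using hI, hsum⟩
  simpa using card_le_card_of_surjOn _ hsurj

theorem le_one_add_sum_of_forall_exists_subset_sum {lam : ℕ → ℕ} {n : ℕ}
    (hmono : ∀ i j, i ≤ j → j ≤ n → lam i ≤ lam j)
    (hcover : ∀ l ≤ ∑ i ∈ range (n + 1), lam i, ∃ I ⊆ range (n + 1), ∑ i ∈ I, lam i = l)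
    {i : ℕ} (hi : i ≤ n) :
    lam i ≤ 1 + ∑ j ∈ range i, lam j := by
  by_contra! hgap
  have hle : 1 + ∑ j ∈ range i, lam j ≤ ∑ j ∈ range (n + 1), lam j :=
    calc 1 + ∑ j ∈ range i, lam j ≤ ∑ j ∈ range (i + 1), lam j := by
          rw [sum_range_succ]; omega
      _ ≤ ∑ j ∈ range (n + 1), lam j := sum_le_sum_of_subset (range_subset_range.2 (by omega))
  obtain ⟨I, hI, hsum⟩ := hcover _ hle
  have hIi : I ⊆ range i := fun x hx => by
    have hxn : x ≤ n := Nat.lt_succ_iff.1 (mem_range.1 (hI hx))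
    have hx_le : lam x ≤ ∑ j ∈ I, lam j := single_le_sum (fun _ _ => Nat.zero_le _) hx
    by_contra hxi
    have := hmono i x (by simpa using hxi) hxn
    omega
  have := sum_le_sum_of_subset (f := lam) hIi
  omega

structure IsGaplessPartition (mu : ℕ → ℕ) (n m : ℕ) : Prop where
  pos : ∀ i ≤ n, 0 < mu i
  mono : ∀ i j, i ≤ j → j ≤ n → mu i ≤ mu j
  sum_eq : ∑ i ∈ range (n + 1), mu i = m
  le_one_add_sum : ∀ i ≤ n, mu i ≤ 1 + ∑ j ∈ range i, mu j

namespace IsGaplessPartition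

variable {mu : ℕ → ℕ} {n m : ℕ}

theorem last_bounds (h : IsGaplessPartition mu n m) : 2 * mu n ≤ m + 1 ∧ mu n + n ≤ m := by
  have hsplit : ∑ j ∈ range n, mu j + mu n = m := by rw [← sum_range_succ, h.sum_eq]
  have hcard : n ≤ ∑ j ∈ range n, mu j := by
    simpa using card_nsmul_le_sum (range n) mu 1 fun j hj => h.pos j (mem_range.1 hj).le
  have := h.le_one_add_sum n le_rfl
  omega

theorem update (h : IsGaplessPartition mu n m) {a : ℕ} (hlo : mu n ≤ a) (hhi : a ≤ m + 1) :
    IsGaplessPartition (Function.update mu (n + 1) a) (n + 1) (m + a) := by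
  have hlow : ∀ i ≤ n, Function.update mu (n + 1) a i = mu i := fun i hi =>
    Function.update_of_ne (by omega) _ _
  have htop : Function.update mu (n + 1) a (n + 1) = a := Function.update_self _ _ _
  have hsum : ∀ k ≤ n + 1, ∑ j ∈ range k, Function.update mu (n + 1) a j = ∑ j ∈ range k, mu j :=
    fun k hk => sum_congr rfl fun j hj => hlow j (by have := mem_range.1 hj; omega)
  refine ⟨fun i hi => ?_, fun i j hij hj => ?_, ?_, fun i hi => ?_⟩
  · rcases (show i ≤ n ∨ i = n + 1 by omega) with hi | rfl
    · rw [hlow i hi]; exact h.pos i hi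
    · rw [htop]; exact (h.pos n le_rfl).trans_le hlo
  · rcases (show j ≤ n ∨ j = n + 1 by omega) with hj | rfl
    · rw [hlow i (by omega), hlow j hj]; exact h.mono i j hij hj
    · rcases (show i ≤ n ∨ i = n + 1 by omega) with hi | rfl
      · rw [hlow i hi, htop]; exact (h.mono i n hi le_rfl).trans hlo
      · exact le_rfl
  · rw [sum_range_succ, hsum _ le_rfl, h.sum_eq, htop]
  · rcases (show i ≤ n ∨ i = n + 1 by omega) with hi | rfl
    · rw [hlow i hi, hsum i (by omega)]; exact h.le_one_add_sum i hi
    · rw [htop, hsum _ le_rfl, h.sum_eq]; omega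

end IsGaplessPartition

theorem exists_isGaplessPartition {n m : ℕ} (hnm : n + 1 ≤ m) (hm : m < 2 ^ (n + 1)) :
    ∃ mu, IsGaplessPartition mu n m := by
  induction n generalizing m with
  | zero =>
    obtain rfl : m = 1 := by simp at hm; omega
    exact ⟨fun _ => 1, fun _ _ => Nat.one_pos, fun _ _ _ _ => le_rfl, by simp,
      fun _ _ => Nat.le_add_right 1 _⟩
  | succ n ih =>
    have hpow : n + 1 < 2 ^ (n + 1) := Nat.lt_two_pow_self
    rw [pow_succ] at hm
    obtain ⟨mu, hmu⟩ := ih (m := max (m / 2) (n + 1)) (le_max_right _ _) (by omega)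
    have hlast := hmu.last_bounds
    have hext := hmu.update (a := m - max (m / 2) (n + 1)) (by omega) (by omega)
    exact ⟨_, by rwa [show max (m / 2) (n + 1) + (m - max (m / 2) (n + 1)) = m by omega] at hext⟩

theorem M_partition_iff_inequalities_general (m n : ℕ) (lam : ℕ → ℕ)
    (hpos : ∀ i ≤ n, 0 < lam i)
    (hmono : ∀ i j, i ≤ j → j ≤ n → lam i ≤ lam j)
    (hsum : ∑ i ∈ Finset.range (n + 1), lam i = m) :
    ((∀ l ≤ m, ∃ I ⊆ Finset.range (n + 1), ∑ i ∈ I, lam i = l) ∧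
      (∀ (n' : ℕ) (mu : ℕ → ℕ),
        (∀ i ≤ n', 0 < mu i) →
        (∀ i j, i ≤ j → j ≤ n' → mu i ≤ mu j) →
        (∑ i ∈ Finset.range (n' + 1), mu i = m) →
        (∀ l ≤ m, ∃ I ⊆ Finset.range (n' + 1), ∑ i ∈ I, mu i = l) →
        n ≤ n')) ↔
    ((∀ i ≤ n, lam i ≤ 1 + ∑ j ∈ Finset.range i, lam j) ∧
      2 ^ n ≤ ∑ i ∈ Finset.range (n + 1), lam i) := by
  subst hsum
  have hcard : n + 1 ≤ ∑ i ∈ range (n + 1), lam i := by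
    simpa using card_nsmul_le_sum (range (n + 1)) lam 1 fun i hi => hpos i (Nat.lt_succ_iff.1 (mem_range.1 hi))
  constructor
  · rintro ⟨hcover, hmin⟩
    refine ⟨fun i hi => le_one_add_sum_of_forall_exists_subset_sum hmono hcover hi, ?_⟩
    by_contra! hsmall
    obtain ⟨k, rfl⟩ : ∃ k, n = k + 1 :=
      Nat.exists_eq_succ_of_ne_zero (by rintro rfl; simp at hsmall hcard; omega)
    obtain ⟨mu, hmu⟩ := exists_isGaplessPartition (by omega) hsmall
    have := hmin k mu hmu.pos hmu.mono hmu.sum_eq fun l hl =>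
      exists_subset_sum_eq_of_le_one_add_sum (fun i hi => hmu.le_one_add_sum i (by omega))
        (hmu.sum_eq ▸ hl)
    omega
  · rintro ⟨hgap, hbig⟩
    refine ⟨fun l hl => exists_subset_sum_eq_of_le_one_add_sum (fun i hi => hgap i (by omega)) hl,
      fun n' mu _ _ _ hcover => ?_⟩
    have := add_one_le_two_pow_card_of_forall_exists_subset_sum hcover
    rw [card_range] at this
    exact Nat.lt_succ_iff.1 ((Nat.pow_lt_pow_iff_right (a := 2) (by norm_num)).1 (by omega))

/-- A partition λ₀ ≤ ⋯ ≤ λₙ of m is an M-partition (weakM with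
minimal number of parts) iff λᵢ ≤ 1 + λ₀ + ⋯ + λ_{i−1} for every i ≤ n and
2^n ≤ λ₀ + ⋯ + λₙ. -/
theorem M_partition_iff_inequalities (m n : ℕ) (hm : 0 < m) (lam : ℕ → ℕ)
    (hpos : ∀ i ≤ n, 0 < lam i)
    (hmono : ∀ i j, i ≤ j → j ≤ n → lam i ≤ lam j)
    (hsum : ∑ i ∈ Finset.range (n + 1), lam i = m) :
    ((∀ l ≤ m, ∃ I ⊆ Finset.range (n + 1), ∑ i ∈ I, lam i = l) ∧
      (∀ (n' : ℕ) (mu : ℕ → ℕ),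
        (∀ i ≤ n', 0 < mu i) →
        (∀ i j, i ≤ j → j ≤ n' → mu i ≤ mu j) →
        (∑ i ∈ Finset.range (n' + 1), mu i = m) →
        (∀ l ≤ m, ∃ I ⊆ Finset.range (n' + 1), ∑ i ∈ I, mu i = l) →
        n ≤ n')) ↔
    ((∀ i ≤ n, lam i ≤ 1 + ∑ j ∈ Finset.range i, lam j) ∧
      2 ^ n ≤ ∑ i ∈ Finset.range (n + 1), lam i) :=
  M_partition_iff_inequalities_general m n lam hpos hmono hsum
end

section
/- Let m = λ₀ + ⋯ + λₙ be an M-partition and r a positive integer. Then λ₀ + λ₁ + ⋯ + λₙ + r is an M-partition of m + r if and only if λₙ ≤ r, r ≤ m + 1, and 2^{n+1} ≤ m + r. -/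
open Finset

theorem sum_range_update_of_le {M : Type*} [AddCommMonoid M] (f : ℕ → M) {k N : ℕ}
    (hk : k ≤ N) (r : M) :
    ∑ j ∈ range k, Function.update f N r j = ∑ j ∈ range k, f j :=
  sum_update_of_notMem (by simpa using hk) f r

section UpdateSucc

variable {α : Type*} {f : ℕ → α} {n : ℕ} {r : α}

theorem update_succ_mono_iff [Preorder α] (hf : ∀ i j, i ≤ j → j ≤ n → f i ≤ f j) :
    (∀ i j, i ≤ j → j ≤ n + 1 →
        Function.update f (n + 1) r i ≤ Function.update f (n + 1) r j) ↔ f n ≤ r := by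
  constructor
  · intro h
    simpa using h n (n + 1) n.le_succ le_rfl
  · intro hr i j hij hj
    rcases hj.eq_or_lt with rfl | hj
    · rcases hij.eq_or_lt with rfl | hi
      · exact le_rfl
      · simpa [hi.ne] using (hf i n (by omega) le_rfl).trans hr
    · simpa [hj.ne, (hij.trans_lt hj).ne] using hf i j hij (by omega)

theorem update_succ_le_add_sum_iff [AddCommMonoid α] [Preorder α] (c : α)
    (hf : ∀ i ≤ n, f i ≤ c + ∑ j ∈ range i, f j) :
    (∀ i ≤ n + 1, Function.update f (n + 1) r i ≤
        c + ∑ j ∈ range i, Function.update f (n + 1) r j) ↔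
      r ≤ c + ∑ j ∈ range (n + 1), f j := by
  constructor
  · intro h
    simpa [sum_range_update_of_le f le_rfl] using h (n + 1) le_rfl
  · intro hr i hi
    rw [sum_range_update_of_le f hi]
    rcases hi.eq_or_lt with rfl | hi
    · simpa using hr
    · simpa [hi.ne] using hf i (by omega)

end UpdateSucc

theorem M_partition_extension_general (m n r : ℕ) (lam : ℕ → ℕ)
    (hmono : ∀ i j, i ≤ j → j ≤ n → lam i ≤ lam j)
    (hsum : ∑ i ∈ Finset.range (n + 1), lam i = m)
    (hineq : ∀ i ≤ n, lam i ≤ 1 + ∑ j ∈ Finset.range i, lam j)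
    (mu : ℕ → ℕ) (hmu : mu = fun i => if i = n + 1 then r else lam i) :
    ((∀ i j, i ≤ j → j ≤ n + 1 → mu i ≤ mu j) ∧
      (∀ i ≤ n + 1, mu i ≤ 1 + ∑ j ∈ Finset.range i, mu j) ∧
      2 ^ (n + 1) ≤ m + r) ↔
    (lam n ≤ r ∧ r ≤ m + 1 ∧ 2 ^ (n + 1) ≤ m + r) := by
  obtain rfl : mu = Function.update lam (n + 1) r := by
    rw [hmu]
    funext i
    exact (Function.update_apply lam (n + 1) r i).symm
  rw [update_succ_mono_iff hmono, update_succ_le_add_sum_iff 1 hineq, hsum, add_comm 1 m]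

/-- Extending an M-partition of m by a new largest part r gives an
M-partition of m + r iff λₙ ≤ r, r ≤ m + 1 and 2^{n+1} ≤ m + r. -/
theorem M_partition_extension (m n r : ℕ) (hr : 0 < r) (lam : ℕ → ℕ)
    (hpos : ∀ i ≤ n, 0 < lam i)
    (hmono : ∀ i j, i ≤ j → j ≤ n → lam i ≤ lam j)
    (hsum : ∑ i ∈ Finset.range (n + 1), lam i = m)
    (hineq : ∀ i ≤ n, lam i ≤ 1 + ∑ j ∈ Finset.range i, lam j)
    (hbig : 2 ^ n ≤ m)
    (mu : ℕ → ℕ) (hmu : mu = fun i => if i = n + 1 then r else lam i) :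
    ((∀ i j, i ≤ j → j ≤ n + 1 → mu i ≤ mu j) ∧
      (∀ i ≤ n + 1, mu i ≤ 1 + ∑ j ∈ Finset.range i, mu j) ∧
      2 ^ (n + 1) ≤ m + r) ↔
    (lam n ≤ r ∧ r ≤ m + 1 ∧ 2 ^ (n + 1) ≤ m + r) :=
  M_partition_extension_general m n r lam hmono hsum hineq mu hmu
end

section
/- Let m be a positive integer with n = ⌊log₂ m⌋. Define λₙ = ⌈m/2⌉ and recursively λᵢ = ⌈(m − (λₙ + λ_{n−1} + ⋯ + λ_{i+1}))/2⌉ for 0 ≤ i < n. Then λ₀ + λ₁ + ⋯ + λₙ = m, the λᵢ are nondecreasing, and this partition is an M-partition of m. -/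
/-!
Reading the recursion from the top, each step takes the ceiling of half of what is left, so the
remainder is halved with rounding down: after the parts `λₙ, …, λᵢ₊₁` have been removed exactly
`⌊m / 2^(n-i)⌋` is left. Hence `λᵢ = ⌈q / 2⌉` with `q = ⌊m / 2^(n-i)⌋ ≥ 1`, while the parts below
`i` add up to what remains afterwards, `⌊q / 2⌋`. Since `m < 2^(n+1)` nothing remains at the end.
-/

open Finset

namespace HalvingPartition

variable {m n : ℕ} {lam : ℕ → ℕ}

theorem sum_Icc_eq_sub_div_pow
    (hrec : ∀ i ≤ n, lam i = (m - ∑ j ∈ Icc (i + 1) n, lam j + 1) / 2) :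
    ∀ k ≤ n + 1, ∑ j ∈ Icc (n + 1 - k) n, lam j = m - m / 2 ^ k := by
  intro k
  induction k with
  | zero => intro _; simp
  | succ k ih =>
    intro hk
    have hrest := ih (by omega)
    have hnext : n + 1 - k = n - k + 1 := by omega
    rw [hnext] at hrest
    have hpart : lam (n - k) = (m / 2 ^ k + 1) / 2 := by
      rw [hrec (n - k) (by omega), hrest, Nat.sub_sub_self (Nat.div_le_self m _)]
    have hhalf : m / 2 ^ (k + 1) = m / 2 ^ k / 2 := by
      rw [pow_succ, Nat.div_div_eq_div_mul]
    have hle : m / 2 ^ k ≤ m := Nat.div_le_self m _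
    rw [show n + 1 - (k + 1) = n - k by omega, ← add_sum_Ioc_eq_sum_Icc (by omega),
      ← Icc_add_one_left_eq_Ioc, hrest, hpart, hhalf]
    omega

theorem eq_div_pow_add_one_div_two
    (hrec : ∀ i ≤ n, lam i = (m - ∑ j ∈ Icc (i + 1) n, lam j + 1) / 2) {i : ℕ} (hi : i ≤ n) :
    lam i = (m / 2 ^ (n - i) + 1) / 2 := by
  have hrest := sum_Icc_eq_sub_div_pow hrec (n - i) (by omega)
  rw [show n + 1 - (n - i) = i + 1 by omega] at hrest
  rw [hrec i hi, hrest, Nat.sub_sub_self (Nat.div_le_self m _)]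

theorem sum_range_eq_div_pow
    (hrec : ∀ i ≤ n, lam i = (m - ∑ j ∈ Icc (i + 1) n, lam j + 1) / 2) (hm : m < 2 ^ (n + 1))
    {i : ℕ} (hi : i ≤ n + 1) :
    ∑ j ∈ range i, lam j = m / 2 ^ (n + 1 - i) := by
  have htail := sum_Icc_eq_sub_div_pow hrec (n + 1 - i) (by omega)
  have htotal := sum_Icc_eq_sub_div_pow hrec (n + 1) le_rfl
  rw [show n + 1 - (n + 1 - i) = i by omega, ← Ico_add_one_right_eq_Icc] at htail
  rw [Nat.sub_self, ← Ico_add_one_right_eq_Icc, ← range_eq_Ico, Nat.div_eq_of_lt hm] at htotal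
  have hsplit := sum_range_add_sum_Ico lam hi
  have hle : m / 2 ^ (n + 1 - i) ≤ m := Nat.div_le_self m _
  omega

end HalvingPartition

open HalvingPartition in
/-- With λₙ = ⌈m/2⌉ and λᵢ = ⌈(m − (λₙ + ⋯ + λ_{i+1}))/2⌉ for i < n
(where n = ⌊log₂ m⌋), we get an M-partition of m. -/
theorem algorithm2_M_partition (m n : ℕ) (hm : 0 < m) (hn : n = Nat.log 2 m)
    (lam : ℕ → ℕ)
    (htop : lam n = (m + 1) / 2)
    (hrec : ∀ i < n, lam i = (m - (∑ j ∈ Finset.Icc (i + 1) n, lam j) + 1) / 2) :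
    (∑ i ∈ Finset.range (n + 1), lam i = m) ∧
    (∀ i ≤ n, 0 < lam i) ∧
    (∀ i j, i ≤ j → j ≤ n → lam i ≤ lam j) ∧
    (∀ i ≤ n, lam i ≤ 1 + ∑ j ∈ Finset.range i, lam j) ∧
    2 ^ n ≤ m := by
  have hlow : 2 ^ n ≤ m := hn ▸ Nat.pow_log_le_self 2 hm.ne'
  have hhigh : m < 2 ^ (n + 1) := hn ▸ Nat.lt_pow_succ_log_self one_lt_two m
  have hrec' : ∀ i ≤ n, lam i = (m - ∑ j ∈ Icc (i + 1) n, lam j + 1) / 2 := by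
    intro i hi
    rcases hi.lt_or_eq with hi | rfl
    · exact hrec i hi
    · simpa using htop
  have hlam i (hi : i ≤ n) := eq_div_pow_add_one_div_two hrec' hi
  have hprefix i (hi : i ≤ n) : ∑ j ∈ range i, lam j = m / 2 ^ (n - i) / 2 := by
    rw [sum_range_eq_div_pow hrec' hhigh (by omega), Nat.div_div_eq_div_mul, ← pow_succ,
      show n + 1 - i = n - i + 1 by omega]
  refine ⟨by simpa using sum_range_eq_div_pow hrec' hhigh le_rfl, fun i hi => ?_,
    fun i j hij hj => ?_, fun i hi => ?_, hlow⟩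
  · have hq : 0 < m / 2 ^ (n - i) :=
      Nat.div_pos ((Nat.pow_le_pow_right two_pos (Nat.sub_le n i)).trans hlow) (by positivity)
    rw [hlam i hi]
    omega
  · rw [hlam i (hij.trans hj), hlam j hj]
    gcongr
    exact one_le_two
  · rw [hlam i hi, hprefix i hi]
    omega
end

section
/- Let m be a positive integer with 2^n ≤ m ≤ 2^n + 2^{n−1} − 2 for some n ≥ 1. Define λᵢ = 2^i for i ≤ n−2, λ_{n−1} = ⌊(m − (2^{n−1} − 1))/2⌋, and λₙ = ⌈(m − (2^{n−1} − 1))/2⌉. Then λ₀ + λ₁ + ⋯ + λₙ is an M-partition of m. -/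
/-!
The parts λ₀, …, λ_{n-2} are 1, 2, …, 2^{n-2}, summing to 2^{n-1} - 1, and the last two parts split
the remainder m - (2^{n-1} - 1) as evenly as possible, so the parts sum to m. Every part is at most one
more than the sum of the parts before it (for λ_{n-1} this is where m ≤ 2^n + 2^{n-1} - 2 enters), and
any such sequence reaches every value up to its total by a greedy choice of parts. Finally
2^n ≤ m < 2^{n+1} gives ⌊log₂ m⌋ = n.
-/

open Finset

theorem exists_subset_range_sum_eq (a : ℕ → ℕ) (k : ℕ)
    (ha : ∀ i < k, a i ≤ ∑ j ∈ range i, a j + 1) {l : ℕ} (hl : l ≤ ∑ i ∈ range k, a i) :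
    ∃ I ⊆ range k, ∑ i ∈ I, a i = l := by
  induction k generalizing l with
  | zero =>
    rw [sum_range_zero, Nat.le_zero] at hl
    exact ⟨∅, empty_subset _, by rw [sum_empty, hl]⟩
  | succ k ih =>
    have ha' : ∀ i < k, a i ≤ ∑ j ∈ range i, a j + 1 := fun i hi => ha i (by omega)
    rw [sum_range_succ] at hl
    by_cases hlow : l ≤ ∑ i ∈ range k, a i
    · obtain ⟨I, hI, hsum⟩ := ih ha' hlow
      exact ⟨I, hI.trans (range_subset_range.mpr k.le_succ), hsum⟩
    · have hk := ha k k.lt_succ_self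
      obtain ⟨I, hI, hsum⟩ := ih ha' (l := l - a k) (by omega)
      have hkI : k ∉ I := fun h => notMem_range_self (hI h)
      refine ⟨insert k I, ?_, ?_⟩
      · rw [range_add_one]
        exact insert_subset_insert k hI
      · rw [sum_insert hkI, hsum]
        omega

theorem sum_range_eq_two_pow_sub_one {a : ℕ → ℕ} {k : ℕ} (ha : ∀ i < k, a i = 2 ^ i) :
    ∑ i ∈ range k, a i = 2 ^ k - 1 := by
  rw [sum_congr rfl fun i hi => ha i (mem_range.mp hi), Nat.geomSum_eq le_rfl]
  simp

theorem algorithm3_M_partition_general (m n : ℕ)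
    (hml : 2 ^ n ≤ m) (hmu : m ≤ 2 ^ n + 2 ^ (n - 1) - 2)
    (lam : ℕ → ℕ)
    (hsmall : ∀ i ≤ n - 2, lam i = 2 ^ i)
    (hpen : lam (n - 1) = (m - (2 ^ (n - 1) - 1)) / 2)
    (hlast : lam n = (m - (2 ^ (n - 1) - 1) + 1) / 2) :
    (∑ i ∈ Finset.range (n + 1), lam i = m) ∧
    (∀ l ≤ m, ∃ I ⊆ Finset.range (n + 1), ∑ i ∈ I, lam i = l) ∧
    n + 1 = Nat.log 2 m + 1 := by
  obtain ⟨k, rfl⟩ : ∃ k, n = k + 2 := by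
    refine ⟨n - 2, ?_⟩
    rcases n with _ | _ | n <;> simp only [pow_zero, zero_tsub, Nat.add_sub_cancel] at hml hmu <;> omega
  simp only [show k + 2 - 1 = k + 1 by omega, Nat.add_sub_cancel] at hsmall hpen hlast hmu
  have hprefix (i : ℕ) (hi : i ≤ k + 1) : ∑ j ∈ range i, lam j = 2 ^ i - 1 :=
    sum_range_eq_two_pow_sub_one fun j hj => hsmall j (by omega)
  have hpow : 2 ^ (k + 2) = 2 * 2 ^ (k + 1) := pow_succ' 2 (k + 1)
  have hpos : 0 < 2 ^ (k + 1) := Nat.two_pow_pos _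
  have hsum : ∑ i ∈ range (k + 3), lam i = m := by
    rw [sum_range_succ, sum_range_succ, hprefix _ le_rfl, hpen, hlast]
    omega
  refine ⟨hsum, fun l hl => exists_subset_range_sum_eq lam _ ?_ (hsum ▸ hl), ?_⟩
  · intro i hi
    rcases (show i ≤ k ∨ i = k + 1 ∨ i = k + 2 by omega) with hik | rfl | rfl
    · rw [hprefix i (by omega), hsmall i hik]
      omega
    · rw [hprefix _ le_rfl, hpen]
      omega
    · rw [sum_range_succ, hprefix _ le_rfl, hpen, hlast]
      omega
  · have hmlt : m < 2 ^ (k + 2 + 1) := by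
      rw [pow_succ]
      omega
    rw [Nat.log_eq_of_pow_le_of_lt_pow hml hmlt]

/-- For 2^n ≤ m ≤ 2^n + 2^{n−1} − 2 (n ≥ 1), with λᵢ = 2^i for
i ≤ n−2, λ_{n−1} = ⌊(m − (2^{n−1} − 1))/2⌋ and λₙ = ⌈(m − (2^{n−1} − 1))/2⌉,
the partition λ₀ + ⋯ + λₙ is an M-partition of m (i.e. a weakM-partition with
⌊log₂ m⌋ + 1 parts). -/
theorem algorithm3_M_partition (m n : ℕ) (hn : 1 ≤ n)
    (hml : 2 ^ n ≤ m) (hmu : m ≤ 2 ^ n + 2 ^ (n - 1) - 2)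
    (lam : ℕ → ℕ)
    (hsmall : ∀ i ≤ n - 2, lam i = 2 ^ i)
    (hpen : lam (n - 1) = (m - (2 ^ (n - 1) - 1)) / 2)
    (hlast : lam n = (m - (2 ^ (n - 1) - 1) + 1) / 2) :
    (∑ i ∈ Finset.range (n + 1), lam i = m) ∧
    (∀ l ≤ m, ∃ I ⊆ Finset.range (n + 1), ∑ i ∈ I, lam i = l) ∧
    n + 1 = Nat.log 2 m + 1 :=
  algorithm3_M_partition_general m n hml hmu lam hsmall hpen hlast
end

section
/- If m = λ₀ + λ₁ + ⋯ + λₙ is an M-partition and 1 ≤ i ≤ n, then λₙ ≥ ⌈(m − 2^{n−i+1} + 1)/i⌉. -/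
/-!
If every part is at most one more than the sum of the parts before it, the first `s` parts sum to
at most `2 ^ s - 1` (the partial sums at most double at each step). Splitting
`m = λ₀ + ⋯ + λₙ` after the first `n - i + 1` parts and bounding each of the last `i` parts by
`λₙ` gives `m + 1 ≤ 2 ^ (n - i + 1) + i λₙ`, which is the claimed bound on `λₙ`.
-/

open Finset

theorem sum_range_add_one_le_two_pow {f : ℕ → ℕ} {N : ℕ}
    (hf : ∀ j < N, f j ≤ 1 + ∑ k ∈ range j, f k) :
    ∑ k ∈ range N, f k + 1 ≤ 2 ^ N := by
  induction N with
  | zero => simp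
  | succ N ih =>
    have hN := hf N N.lt_succ_self
    have ih := ih fun j hj => hf j (Nat.lt_succ_of_lt hj)
    rw [sum_range_succ, pow_succ]
    omega

theorem sum_Ico_le_card_mul_of_le {f : ℕ → ℕ} {a n : ℕ}
    (hf : ∀ k, k ≤ n → f k ≤ f n) :
    ∑ k ∈ Ico a (n + 1), f k ≤ (n + 1 - a) * f n := by
  calc ∑ k ∈ Ico a (n + 1), f k ≤ ∑ _k ∈ Ico a (n + 1), f n :=
        sum_le_sum fun k hk => hf k (Nat.lt_succ_iff.mp (mem_Ico.mp hk).2)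
    _ = (n + 1 - a) * f n := by rw [sum_const, Nat.card_Ico, smul_eq_mul]

theorem sum_range_add_one_le_two_pow_add_mul {f : ℕ → ℕ} {n s : ℕ} (hs : s ≤ n + 1)
    (hmono : ∀ k, k ≤ n → f k ≤ f n)
    (hineq : ∀ j ≤ n, f j ≤ 1 + ∑ k ∈ range j, f k) :
    ∑ k ∈ range (n + 1), f k + 1 ≤ 2 ^ s + (n + 1 - s) * f n := by
  have hhead : ∑ k ∈ range s, f k + 1 ≤ 2 ^ s :=
    sum_range_add_one_le_two_pow fun j hj => hineq j (by omega)
  have htail := sum_Ico_le_card_mul_of_le (a := s) hmono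
  rw [← sum_range_add_sum_Ico f hs]
  omega

theorem largest_part_lower_bound_general (m n : ℕ) (lam : ℕ → ℕ)
    (hmono : ∀ i j, i ≤ j → j ≤ n → lam i ≤ lam j)
    (hsum : ∑ i ∈ Finset.range (n + 1), lam i = m)
    (hineq : ∀ j ≤ n, lam j ≤ 1 + ∑ k ∈ Finset.range j, lam k)
    (hbig : 2 ^ n ≤ m) :
    ∀ i, 1 ≤ i → i ≤ n → (m - 2 ^ (n - i + 1) + 1 + (i - 1)) / i ≤ lam n := by
  intro i hi hin
  have hsplit := sum_range_add_one_le_two_pow_add_mul (s := n - i + 1) (by omega)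
    (fun k hk => hmono k n hk le_rfl) hineq
  have hpow : 2 ^ (n - i + 1) ≤ 2 ^ n := Nat.pow_le_pow_right two_pos (by omega)
  have hcard : n + 1 - (n - i + 1) = i := by omega
  rw [hsum, hcard] at hsplit
  rw [Nat.div_le_iff_le_mul_add_pred hi]
  omega

/-- If m = λ₀ + ⋯ + λₙ is an M-partition and 1 ≤ i ≤ n, then
λₙ ≥ ⌈(m − 2^{n−i+1} + 1)/i⌉. -/
theorem largest_part_lower_bound (m n : ℕ) (lam : ℕ → ℕ)
    (hpos : ∀ i ≤ n, 0 < lam i)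
    (hmono : ∀ i j, i ≤ j → j ≤ n → lam i ≤ lam j)
    (hsum : ∑ i ∈ Finset.range (n + 1), lam i = m)
    (hineq : ∀ j ≤ n, lam j ≤ 1 + ∑ k ∈ Finset.range j, lam k)
    (hbig : 2 ^ n ≤ m) :
    ∀ i, 1 ≤ i → i ≤ n → (m - 2 ^ (n - i + 1) + 1 + (i - 1)) / i ≤ lam n :=
  largest_part_lower_bound_general m n lam hmono hsum hineq hbig
end

section
/- If m = λ₀ + λ₁ + ⋯ + λₙ is an M-partition, then max{m − 2^n + 1, ⌈(m − 2^{n−1} + 1)/2⌉} ≤ λₙ ≤ ⌈m/2⌉. -/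
/-!
Write `Sᵢ = λ₀ + ⋯ + λ_{i-1}`. The M-condition `λᵢ ≤ 1 + Sᵢ` gives `S_{i+1} ≤ 2 Sᵢ + 1`, hence
`Sᵢ ≤ 2^i - 1`. The upper bound is `λₙ ≤ 1 + Sₙ = 1 + m - λₙ`. The lower bounds come from
`m = Sₙ + λₙ ≤ 2^n - 1 + λₙ` and, using `λ_{n-1} ≤ λₙ`, from
`m = S_{n-1} + λ_{n-1} + λₙ ≤ 2^{n-1} - 1 + 2λₙ`.
-/

open Finset

theorem sum_range_add_one_le_two_pow_s13 {a : ℕ → ℕ} {n : ℕ}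
    (h : ∀ i < n, a i ≤ 1 + ∑ j ∈ range i, a j) :
    ∑ i ∈ range n, a i + 1 ≤ 2 ^ n := by
  induction n with
  | zero => simp
  | succ k ih =>
    have hk := ih fun i hi => h i (Nat.lt_succ_of_lt hi)
    have hak := h k (Nat.lt_succ_self k)
    rw [sum_range_succ, pow_succ]
    omega

theorem sum_range_succ_add_one_le_two_pow_pred_add_two_mul {a : ℕ → ℕ} {n : ℕ}
    (h : ∀ i < n, a i ≤ 1 + ∑ j ∈ range i, a j) (hmono : a (n - 1) ≤ a n) :
    ∑ i ∈ range (n + 1), a i + 1 ≤ 2 ^ (n - 1) + 2 * a n := by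
  cases n with
  | zero => simp; omega
  | succ k =>
    have hk := sum_range_add_one_le_two_pow_s13 fun i hi => h i (Nat.lt_succ_of_lt hi)
    rw [Nat.add_sub_cancel] at hmono ⊢
    rw [sum_range_succ, sum_range_succ]
    omega

theorem largest_part_bounds_general (m n : ℕ) (lam : ℕ → ℕ)
    (hpos : ∀ i ≤ n, 0 < lam i)
    (hmono : ∀ i j, i ≤ j → j ≤ n → lam i ≤ lam j)
    (hsum : ∑ i ∈ Finset.range (n + 1), lam i = m)
    (hineq : ∀ i ≤ n, lam i ≤ 1 + ∑ j ∈ Finset.range i, lam j) :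
    max (m - 2 ^ n + 1) ((m - 2 ^ (n - 1) + 1 + 1) / 2) ≤ lam n ∧
    lam n ≤ (m + 1) / 2 := by
  have hprefix := sum_range_add_one_le_two_pow_s13 fun i hi => hineq i hi.le
  have hlast_two := sum_range_succ_add_one_le_two_pow_pred_add_two_mul
    (fun i hi => hineq i hi.le) (hmono _ _ (Nat.sub_le n 1) le_rfl)
  have hlast := hineq n le_rfl
  have hlast_pos := hpos n le_rfl
  rw [hsum] at hlast_two
  rw [sum_range_succ] at hsum
  omega

/-- If m = λ₀ + ⋯ + λₙ is an M-partition, then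
max{m − 2^n + 1, ⌈(m − 2^{n−1} + 1)/2⌉} ≤ λₙ ≤ ⌈m/2⌉. -/
theorem largest_part_bounds (m n : ℕ) (lam : ℕ → ℕ)
    (hpos : ∀ i ≤ n, 0 < lam i)
    (hmono : ∀ i j, i ≤ j → j ≤ n → lam i ≤ lam j)
    (hsum : ∑ i ∈ Finset.range (n + 1), lam i = m)
    (hineq : ∀ i ≤ n, lam i ≤ 1 + ∑ j ∈ Finset.range i, lam j)
    (hbig : 2 ^ n ≤ m) :
    max (m - 2 ^ n + 1) ((m - 2 ^ (n - 1) + 1 + 1) / 2) ≤ lam n ∧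
    lam n ≤ (m + 1) / 2 :=
  largest_part_bounds_general m n lam hpos hmono hsum hineq
end

section
/- Let m be a positive integer with 2^n + 2^{n−1} − 1 ≤ m < 2^{n+1}, and let a_k = |Mp(k)| denote the number of M-partitions of k. Then a_m = ∑_{j=⌊m/2⌋}^{2^n − 1} a_j. -/
/-!
Partial sums of an M-partition satisfy λ₀ + ⋯ + λ_{i-1} < 2^i, so an M-partition of k has exactly
⌊log₂ k⌋ + 1 parts. For m in the given range every M-partition of m therefore has n + 1 parts, and
deleting its largest part x leaves an M-partition of j = m - x with j < 2^n; the growth condition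
x ≤ 1 + j is exactly j ≥ ⌊m/2⌋. Conversely, every part of an M-partition of j is at most (j + 1)/2,
and 2m ≥ 3·2^n - 2 ≥ 3j + 1 makes m - j at least that large, so m - j can be appended to any
M-partition of j as its largest part.
-/

/-- `l` is (the sorted list of parts of) an M-partition of `k`: nondecreasing
positive parts λ₀ ≤ ⋯ ≤ λ_s summing to `k`, with λᵢ ≤ 1 + λ₀ + ⋯ + λ_{i−1}
for all i and 2^s ≤ k (where s + 1 is the number of parts). -/
def IsMPartition (k : ℕ) (l : List ℕ) : Prop :=
  l ≠ [] ∧ l.Pairwise (· ≤ ·) ∧ (∀ x ∈ l, 0 < x) ∧ l.sum = k ∧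
  (∀ i, (h : i < l.length) → l.get ⟨i, h⟩ ≤ 1 + (l.take i).sum) ∧
  2 ^ (l.length - 1) ≤ k

/-- `a k` is the number of M-partitions of `k` (sorted lists of parts are in
bijection with multisets of parts). -/
noncomputable def numMPartitions (k : ℕ) : ℕ :=
  Nat.card {l : List ℕ // IsMPartition k l}

namespace IsMPartition

variable {k j x t : ℕ} {l : List ℕ}

theorem sum_take_lt_two_pow (h : IsMPartition k l) (i : ℕ) : (l.take i).sum < 2 ^ i := by
  induction i with
  | zero => simp
  | succ i ih =>
    by_cases hi : i < l.length
    · have hgrowth : l[i] ≤ 1 + (l.take i).sum := h.2.2.2.2.1 i hi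
      rw [List.sum_take_succ l i hi, pow_succ]
      omega
    · rw [List.take_of_length_le (by omega)] at ih
      rw [List.take_of_length_le (by omega), pow_succ]
      omega

theorem lt_two_pow_length (h : IsMPartition k l) : k < 2 ^ l.length := by
  simpa [h.2.2.2.1] using h.sum_take_lt_two_pow l.length

theorem length_eq_succ (h : IsMPartition k l) (hlo : 2 ^ t ≤ k) (hhi : k < 2 ^ (t + 1)) :
    l.length = t + 1 := by
  have hne : l.length ≠ 0 := by simpa using h.1
  have h₁ : t < l.length :=
    (Nat.pow_lt_pow_iff_right (by norm_num)).1 (hlo.trans_lt h.lt_two_pow_length)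
  have h₂ : l.length - 1 < t + 1 :=
    (Nat.pow_lt_pow_iff_right (by norm_num)).1 (h.2.2.2.2.2.trans_lt hhi)
  omega

theorem two_mul_le_add_one (h : IsMPartition k l) (hx : x ∈ l) : 2 * x ≤ k + 1 := by
  obtain ⟨i, hi, rfl⟩ := List.getElem_of_mem hx
  have hgrowth : l[i] ≤ 1 + (l.take i).sum := h.2.2.2.2.1 i hi
  have hsplit := congrArg List.sum (List.take_append_drop (i + 1) l)
  rw [List.sum_append, List.sum_take_succ l i hi, h.2.2.2.1] at hsplit
  omega

theorem append_singleton (h : IsMPartition j l) (hle : ∀ y ∈ l, y ≤ x) (hx : x ≤ 1 + j)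
    (hpow : 2 ^ l.length ≤ j + x) : IsMPartition (j + x) (l ++ [x]) := by
  obtain ⟨hne, hsort, hpos, hsum, hgrowth, -⟩ := h
  refine ⟨by simp, List.pairwise_append.2 ⟨hsort, by simp, by simpa using hle⟩, ?_,
    by simp [hsum], ?_, by simpa using hpow⟩
  · simp only [List.mem_append, List.mem_singleton]
    obtain ⟨y, hy⟩ := List.exists_mem_of_ne_nil _ hne
    rintro z (hz | rfl)
    · exact hpos z hz
    · exact (hpos y hy).trans_le (hle y hy)
  · intro i hi
    simp only [List.get_eq_getElem]
    rcases Nat.lt_or_ge i l.length with hil | hil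
    · rw [List.getElem_append_left hil, List.take_append_of_le_length hil.le]
      exact hgrowth i hil
    · obtain rfl : i = l.length := by simp at hi; omega
      simpa [hsum] using hx

theorem of_append_singleton (h : IsMPartition k (l ++ [x])) (hl : l ≠ [])
    (hpow : 2 ^ (l.length - 1) ≤ l.sum) : IsMPartition l.sum l := by
  obtain ⟨-, hsort, hpos, -, hgrowth, -⟩ := h
  refine ⟨hl, (List.pairwise_append.1 hsort).1, fun y hy => hpos y (by simp [hy]), rfl,
    fun i hi => ?_, hpow⟩
  simpa [List.getElem_append_left hi, List.take_append_of_le_length hi.le] using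
    hgrowth i (by simp; omega)

theorem last_le_one_add_sum (h : IsMPartition k (l ++ [x])) : x ≤ 1 + l.sum := by
  simpa using h.2.2.2.2.1 l.length (by simp)

def toNatPartition (h : IsMPartition k l) : k.Partition where
  parts := l
  parts_pos hx := h.2.2.1 _ (by simpa using hx)
  parts_sum := by simpa using h.2.2.2.1

instance : Finite {l : List ℕ // IsMPartition k l} :=
  Finite.of_injective (fun p => p.2.toNatPartition) fun p q hpq => Subtype.ext <|
    List.Perm.eq_of_pairwise' p.2.2.1 q.2.2.1
      (Multiset.coe_eq_coe.1 (congrArg Nat.Partition.parts hpq))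

end IsMPartition

theorem isMPartition_append_singleton_iff {m n : ℕ} (hn : 1 ≤ n)
    (hml : 2 ^ n + 2 ^ (n - 1) - 1 ≤ m) (hmu : m < 2 ^ (n + 1)) {l : List ℕ} {x : ℕ} :
    IsMPartition m (l ++ [x]) ↔
      l.sum ∈ Finset.Icc (m / 2) (2 ^ n - 1) ∧ IsMPartition l.sum l ∧ l.sum + x = m := by
  have hpow : 2 ^ n = 2 * 2 ^ (n - 1) := by rw [← pow_succ', Nat.sub_add_cancel hn]
  rw [Finset.mem_Icc]
  constructor
  · intro h
    have hsum : l.sum + x = m := by simpa using h.2.2.2.1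
    have hlen : l.length = n := by simpa using h.length_eq_succ (t := n) (by omega) hmu
    have hx := h.last_le_one_add_sum
    have hl : IsMPartition l.sum l :=
      h.of_append_singleton (by rintro rfl; simp at hlen; omega) (by rw [hlen]; omega)
    have hlt : l.sum < 2 ^ n := hlen ▸ hl.lt_two_pow_length
    exact ⟨⟨by omega, by omega⟩, hl, hsum⟩
  · rintro ⟨hj, hl, hsum⟩
    have hlen : l.length = n := by
      have := hl.length_eq_succ (t := n - 1) (by omega) (by rw [Nat.sub_add_cancel hn]; omega)
      omega
    rw [← hsum]
    refine hl.append_singleton (fun y hy => ?_) (by omega) (by rw [hlen]; omega)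
    have := hl.two_mul_le_add_one hy
    omega

theorem IsMPartition.dropLast_spec {m n : ℕ} (hn : 1 ≤ n)
    (hml : 2 ^ n + 2 ^ (n - 1) - 1 ≤ m) (hmu : m < 2 ^ (n + 1)) {l : List ℕ}
    (h : IsMPartition m l) :
    l.dropLast.sum ∈ Finset.Icc (m / 2) (2 ^ n - 1) ∧
      IsMPartition l.dropLast.sum l.dropLast ∧ l.dropLast.sum + l.getLast h.1 = m :=
  (isMPartition_append_singleton_iff hn hml hmu).1 (by rwa [List.dropLast_append_getLast])

def mPartitionEquivSigma {m n : ℕ} (hn : 1 ≤ n) (hml : 2 ^ n + 2 ^ (n - 1) - 1 ≤ m)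
    (hmu : m < 2 ^ (n + 1)) :
    {l : List ℕ // IsMPartition m l} ≃
      Σ j : Finset.Icc (m / 2) (2 ^ n - 1), {l : List ℕ // IsMPartition j l} where
  toFun p :=
    have h := p.2.dropLast_spec hn hml hmu
    ⟨⟨_, h.1⟩, ⟨_, h.2.1⟩⟩
  invFun
    | ⟨⟨j, hj⟩, l, hl⟩ => ⟨l ++ [m - j], (isMPartition_append_singleton_iff hn hml hmu).2 <| by
      obtain rfl : l.sum = j := hl.2.2.2.1
      have : 2 ^ n - 1 < m := by have := Nat.one_le_two_pow (n := n - 1); omega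
      exact ⟨hj, hl, by rw [Finset.mem_Icc] at hj; omega⟩⟩
  left_inv p := Subtype.ext <| by
    have h := p.2.dropLast_spec hn hml hmu
    show p.1.dropLast ++ [m - p.1.dropLast.sum] = p.1
    rw [show m - p.1.dropLast.sum = p.1.getLast p.2.1 by omega]
    exact List.dropLast_append_getLast p.2.1
  right_inv := by
    rintro ⟨⟨j, hj⟩, l, hl⟩
    refine Sigma.subtype_ext (Subtype.ext ?_) (List.dropLast_concat ..)
    simpa [List.dropLast_concat] using hl.2.2.2.1

theorem simple_count_general (m n : ℕ) (hn : 1 ≤ n)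
    (hml : 2 ^ n + 2 ^ (n - 1) - 1 ≤ m) (hmu : m < 2 ^ (n + 1)) :
    numMPartitions m = ∑ j ∈ Finset.Icc (m / 2) (2 ^ n - 1), numMPartitions j := by
  rw [numMPartitions, Nat.card_congr (mPartitionEquivSigma hn hml hmu), Nat.card_sigma]
  exact Finset.sum_coe_sort _ numMPartitions

/-- For 2^n + 2^{n−1} − 1 ≤ m < 2^{n+1} (n ≥ 1),
a_m = ∑_{j=⌊m/2⌋}^{2^n − 1} a_j. -/
theorem simple_count (m n : ℕ) (hm : 0 < m) (hn : 1 ≤ n)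
    (hml : 2 ^ n + 2 ^ (n - 1) - 1 ≤ m) (hmu : m < 2 ^ (n + 1)) :
    numMPartitions m = ∑ j ∈ Finset.Icc (m / 2) (2 ^ n - 1), numMPartitions j :=
  simple_count_general m n hn hml hmu
end

section
/- For even m with 2^n + 2^{n−1} ≤ m < 2^{n+1}, the number of M-partitions satisfies a_m = a_{m+1}. -/
-- The complete partitions of MacMahon and Park, as sorted lists of parts.
def IsCompletePartition (l : List ℕ) : Prop :=
  l.Pairwise (· ≤ ·) ∧ (∀ x ∈ l, 0 < x) ∧
    ∀ i (h : i < l.length), l[i] ≤ 1 + (l.take i).sum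

namespace IsCompletePartition

theorem concat_iff {t : List ℕ} {b : ℕ} :
    IsCompletePartition (t ++ [b]) ↔
      IsCompletePartition t ∧ (∀ x ∈ t, x ≤ b) ∧ 0 < b ∧ b ≤ 1 + t.sum := by
  have prefix_iff :
      (∀ i (h : i < (t ++ [b]).length), (t ++ [b])[i] ≤ 1 + ((t ++ [b]).take i).sum) ↔
        (∀ i (h : i < t.length), t[i] ≤ 1 + (t.take i).sum) ∧ b ≤ 1 + t.sum := by
    simp only [List.length_append, List.length_singleton]
    constructor
    · intro h
      refine ⟨fun i hi => ?_, ?_⟩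
      · simpa [List.getElem_append_left hi, List.take_append_of_le_length hi.le]
          using h i (by omega)
      · simpa [List.take_left'] using h t.length (by omega)
    · rintro ⟨ht, hb⟩ i hi
      rcases Nat.lt_succ_iff_lt_or_eq.1 hi with hi | rfl
      · simpa [List.getElem_append_left hi, List.take_append_of_le_length hi.le] using ht i hi
      · simpa [List.take_left'] using hb
  simp only [IsCompletePartition, List.pairwise_append, List.forall_mem_append, prefix_iff,
    List.pairwise_singleton, List.mem_singleton, forall_eq, true_and]
  tauto

theorem sum_lt {l : List ℕ} (hl : IsCompletePartition l) : l.sum < 2 ^ l.length := by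
  induction l using List.reverseRecOn with
  | nil => simp
  | append_singleton t b ih =>
    obtain ⟨ht, -, -, hb⟩ := concat_iff.1 hl
    have := ih ht
    simp only [List.sum_append, List.sum_singleton, List.length_append, List.length_singleton,
      pow_succ]
    omega

theorem sum_lt_of_last_eq {u : List ℕ} {c : ℕ} (hl : IsCompletePartition (u ++ [c, c])) :
    (u ++ [c, c]).sum < 3 * 2 ^ u.length := by
  rw [← List.singleton_append, ← List.append_assoc] at hl
  obtain ⟨hu, -, -, hc⟩ := concat_iff.1 (concat_iff.1 hl).1
  have := hu.sum_lt
  simp only [List.sum_append, List.sum_cons, List.sum_nil]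
  omega

end IsCompletePartition

theorem isMPartition_iff {k : ℕ} {l : List ℕ} :
    IsMPartition k l ↔
      l ≠ [] ∧ IsCompletePartition l ∧ l.sum = k ∧ 2 ^ (l.length - 1) ≤ k := by
  simp only [IsMPartition, IsCompletePartition, List.get_eq_getElem]
  tauto

namespace IsMPartition

theorem length_eq_log {k : ℕ} {l : List ℕ} (hl : IsMPartition k l) :
    l.length = Nat.log 2 k + 1 := by
  obtain ⟨hne, hc, rfl, hlen⟩ := isMPartition_iff.1 hl
  have hpos : 0 < l.length := List.length_pos_iff.2 hne
  rw [Nat.log_eq_of_pow_le_of_lt_pow hlen (by simpa [Nat.sub_add_cancel hpos] using hc.sum_lt)]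
  omega

theorem concat_succ {k : ℕ} {t : List ℕ} {b : ℕ} (hk : Even k)
    (hl : IsMPartition k (t ++ [b])) :
    IsMPartition (k + 1) (t ++ [b + 1]) := by
  obtain ⟨-, hc, hsum, hlen⟩ := isMPartition_iff.1 hl
  obtain ⟨ht, hle, -, hb⟩ := IsCompletePartition.concat_iff.1 hc
  obtain ⟨r, rfl⟩ := hk
  simp only [List.sum_append, List.sum_singleton] at hsum
  have hle' : ∀ x ∈ t, x ≤ b + 1 := fun x hx => (hle x hx).trans b.le_succ
  refine isMPartition_iff.2
    ⟨by simp, IsCompletePartition.concat_iff.2 ⟨ht, hle', by omega, by omega⟩,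
      by simp; omega, by simpa using hlen.trans (Nat.le_succ _)⟩

theorem concat_pred {k : ℕ} {t : List ℕ} {b : ℕ} (hl : IsMPartition (k + 1) (t ++ [b]))
    (ht : t ≠ []) (hlt : ∀ x ∈ t, x < b) (hk : 2 ^ t.length ≤ k) :
    IsMPartition k (t ++ [b - 1]) := by
  obtain ⟨-, hc, hsum, -⟩ := isMPartition_iff.1 hl
  obtain ⟨htc, -, -, hb⟩ := IsCompletePartition.concat_iff.1 hc
  obtain ⟨x, hx⟩ := List.exists_mem_of_ne_nil t ht
  have hx_pos := htc.2.1 x hx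
  have hx_lt := hlt x hx
  simp only [List.sum_append, List.sum_singleton] at hsum
  have hle : ∀ y ∈ t, y ≤ b - 1 := fun y hy => Nat.le_sub_one_of_lt (hlt y hy)
  refine isMPartition_iff.2
    ⟨by simp, IsCompletePartition.concat_iff.2 ⟨htc, hle, by omega, by omega⟩,
      by simp; omega, by simpa using hk⟩

end IsMPartition

theorem numMPartitions_eq_succ {k : ℕ} (hk : Even k)
    (hlast : ∀ t b, IsMPartition (k + 1) (t ++ [b]) →
      t ≠ [] ∧ (∀ x ∈ t, x < b) ∧ 2 ^ t.length ≤ k) :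
    numMPartitions k = numMPartitions (k + 1) := by
  have concat_of {j l} (hl : IsMPartition j l) : ∃ t b, l = t ++ [b] :=
    (List.eq_nil_or_concat' l).resolve_left hl.1
  refine Nat.card_congr
    { toFun := fun l => ⟨l.1.modifyLast (· + 1), ?_⟩
      invFun := fun l => ⟨l.1.modifyLast (· - 1), ?_⟩
      left_inv := ?_
      right_inv := ?_ }
  · obtain ⟨l, hl⟩ := l
    obtain ⟨t, b, rfl⟩ := concat_of hl
    simpa only [List.modifyLast_concat] using hl.concat_succ hk
  · obtain ⟨l, hl⟩ := l
    obtain ⟨t, b, rfl⟩ := concat_of hl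
    obtain ⟨ht, hlt, hlen⟩ := hlast t b hl
    simpa only [List.modifyLast_concat] using hl.concat_pred ht hlt hlen
  · rintro ⟨l, hl⟩
    obtain ⟨t, b, rfl⟩ := concat_of hl
    simp [List.modifyLast_concat]
  · rintro ⟨l, hl⟩
    obtain ⟨t, b, rfl⟩ := concat_of hl
    have hb : 0 < b := hl.2.2.1 b (by simp)
    simp [List.modifyLast_concat, Nat.sub_add_cancel hb]

theorem IsMPartition.ne_nil_and_lt_last_and_pow_le {m n : ℕ} {t : List ℕ} {b : ℕ}
    (heven : Even m) (hml : 2 ^ n + 2 ^ (n - 1) ≤ m) (hmu : m < 2 ^ (n + 1))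
    (hl : IsMPartition (m + 1) (t ++ [b])) :
    t ≠ [] ∧ (∀ x ∈ t, x < b) ∧ 2 ^ t.length ≤ m := by
  have hlog : Nat.log 2 (m + 1) = n := by
    refine Nat.log_eq_of_pow_le_of_lt_pow ((le_of_add_le_left hml).trans m.le_succ) ?_
    obtain ⟨r, rfl⟩ := heven
    rw [pow_succ] at hmu ⊢
    omega
  have hlen : t.length = n := by simpa [hlog] using hl.length_eq_log
  subst hlen
  obtain ⟨u, c, rfl⟩ := (List.eq_nil_or_concat' t).resolve_left (by
    rintro rfl
    simp only [List.length_nil, pow_zero, zero_tsub, zero_add, pow_one] at hml hmu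
    omega)
  simp only [List.length_append, List.length_singleton, Nat.add_sub_cancel, pow_succ] at hml ⊢
  obtain ⟨-, hcomplete, hsum, -⟩ := isMPartition_iff.1 hl
  obtain ⟨huc, hle, -, -⟩ := IsCompletePartition.concat_iff.1 hcomplete
  obtain ⟨-, hu_le, -, -⟩ := IsCompletePartition.concat_iff.1 huc
  have hcb : c < b := by
    refine lt_of_le_of_ne (hle c (by simp)) ?_
    rintro rfl
    have := IsCompletePartition.sum_lt_of_last_eq (u := u) (c := c) (by simpa using hcomplete)
    simp only [List.append_assoc, List.singleton_append] at hsum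
    omega
  refine ⟨by simp, fun x hx => ?_, by omega⟩
  rcases List.mem_append.1 hx with hx | hx
  · exact (hu_le x hx).trans_lt hcb
  · simpa [List.mem_singleton.1 hx] using hcb

theorem even_count_eq_general (m n : ℕ) (heven : Even m)
    (hml : 2 ^ n + 2 ^ (n - 1) ≤ m) (hmu : m < 2 ^ (n + 1)) :
    numMPartitions m = numMPartitions (m + 1) :=
  numMPartitions_eq_succ heven fun _ _ hl => hl.ne_nil_and_lt_last_and_pow_le heven hml hmu

/-- For even m with 2^n + 2^{n−1} ≤ m < 2^{n+1} (n ≥ 1),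
a_m = a_{m+1}. -/
theorem even_count_eq (m n : ℕ) (hn : 1 ≤ n) (heven : Even m)
    (hml : 2 ^ n + 2 ^ (n - 1) ≤ m) (hmu : m < 2 ^ (n + 1)) :
    numMPartitions m = numMPartitions (m + 1) :=
  even_count_eq_general m n heven hml hmu
end

section
/- Let m, m⁽¹⁾, m⁽¹²⁾ be positive integers with 2^n ≤ m < 2^{n+1}, ⌊m/2⌋ ≤ m⁽¹⁾ ≤ min{⌊(m + 2^{n−1} − 1)/2⌋, 2^n − 1}, ⌊m⁽¹⁾/2⌋ ≤ m⁽¹²⁾ ≤ 2^{n−1} − 1, and m⁽¹⁾ − m⁽¹²⁾ > m − m⁽¹⁾. If λ₀ + ⋯ + λ_{n−2} is an M-partition of m⁽¹²⁾, then λ_{n−2} < m⁽¹⁾ − m⁽¹²⁾. -/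
/-!
The M-partition inequality at the last index bounds the largest part by half of
m⁽¹²⁾ + 1 ≤ 2^(n-1). On the other side, the gap inequality combined with 2^n ≤ m and with
the two upper bounds on m⁽¹⁾ gives 2 (m⁽¹⁾ − m⁽¹²⁾) ≥ 2^(n-1) + 3.
-/

open Finset

theorem two_mul_le_sum_range_succ_add_one {lam : ℕ → ℕ} {k : ℕ}
    (h : lam k ≤ 1 + ∑ j ∈ range k, lam j) :
    2 * lam k ≤ ∑ j ∈ range (k + 1), lam j + 1 := by
  rw [sum_range_succ]
  omega

theorem add_three_le_two_mul_sub {m m1 m12 a : ℕ} (hml : 2 * a ≤ m)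
    (hm1u : m1 ≤ min ((m + a - 1) / 2) (2 * a - 1)) (hgap : m1 - m12 > m - m1) :
    a + 3 ≤ 2 * (m1 - m12) := by
  omega

theorem largest_part_small_general (m m1 m12 n : ℕ) (hn : 2 ≤ n)
    (hml : 2 ^ n ≤ m)
    (hm1u : m1 ≤ min ((m + 2 ^ (n - 1) - 1) / 2) (2 ^ n - 1))
    (hm12u : m12 ≤ 2 ^ (n - 1) - 1)
    (hgap : m1 - m12 > m - m1)
    (lam : ℕ → ℕ)
    (hsum : ∑ i ∈ Finset.range (n - 2 + 1), lam i = m12)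
    (hineq : ∀ i ≤ n - 2, lam i ≤ 1 + ∑ j ∈ Finset.range i, lam j) :
    lam (n - 2) < m1 - m12 := by
  have hpow : 2 ^ n = 2 * 2 ^ (n - 1) := by
    rw [← pow_succ']
    congr 1
    omega
  rw [hpow] at hml hm1u
  have hgap' := add_three_le_two_mul_sub hml hm1u hgap
  have hlast := two_mul_le_sum_range_succ_add_one (hineq (n - 2) le_rfl)
  rw [hsum] at hlast
  omega

/-- Under the stated conditions on m, m⁽¹⁾, m⁽¹²⁾, if
λ₀ + ⋯ + λ_{n−2} is an M-partition of m⁽¹²⁾ then λ_{n−2} < m⁽¹⁾ − m⁽¹²⁾. -/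
theorem largest_part_small (m m1 m12 n : ℕ) (hn : 2 ≤ n)
    (hm : 0 < m) (hm1 : 0 < m1) (hm12 : 0 < m12)
    (hml : 2 ^ n ≤ m) (hmu : m < 2 ^ (n + 1))
    (hm1l : m / 2 ≤ m1)
    (hm1u : m1 ≤ min ((m + 2 ^ (n - 1) - 1) / 2) (2 ^ n - 1))
    (hm12l : m1 / 2 ≤ m12) (hm12u : m12 ≤ 2 ^ (n - 1) - 1)
    (hgap : m1 - m12 > m - m1)
    (lam : ℕ → ℕ)
    (hpos : ∀ i ≤ n - 2, 0 < lam i)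
    (hmono : ∀ i j, i ≤ j → j ≤ n - 2 → lam i ≤ lam j)
    (hsum : ∑ i ∈ Finset.range (n - 2 + 1), lam i = m12)
    (hineq : ∀ i ≤ n - 2, lam i ≤ 1 + ∑ j ∈ Finset.range i, lam j)
    (hbig : 2 ^ (n - 2) ≤ m12) :
    lam (n - 2) < m1 - m12 :=
  largest_part_small_general m m1 m12 n hn hml hm1u hm12u hgap lam hsum hineq
end
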